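/- Assume the standing assumptions. Then a belongs to the continuous spectrum of U if and only if 1 belongs to the continuous spectrum of T, and −a belongs to the continuous spectrum of U if and only if −1 belongs to the continuous spectrum of T. -/

import Mathlib

/-!
Write `P = d* d`, `A = U - a` and `B = T - 1`. Both operators have dense range exactly when they
are injective (`B` is self-adjoint and `A* = S A S`), so on a Hilbert space each lies in the
continuous spectrum iff it is injective but not bounded below. Injectivity and bounds from below
pass between `A` and `B` through three estimates:
* `‖A (d* u)‖² ≤ 2 a² ‖B u‖ ‖u‖`, because `A d* = a (S - 1) d*` and, `S` being a self-adjoint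
  involution, `‖(S - 1) v‖² = -2 Re ⟪(S - 1) v, v⟫`;
* `|a² - b²| ‖(1 - P) x‖² ≤ ‖A x‖ (‖C x‖ + |a| ‖x‖)`, comparing
  `‖C x‖² = a² ‖P x‖² + b² ‖(1 - P) x‖²` with `‖S C x‖ = ‖C x‖ ≈ |a| ‖x‖`;
* `|a| ‖B (d x)‖ ≤ ‖A x‖ + (|a| + |b|) ‖(1 - P) x‖`.
So an approximate eigenvector of `U` for `a` lies almost in the range of `d*`, and `d` maps it to
one of `T` for `1`. The pair `-a`, `-1` is the pair `a`, `1` for the involution `-S`.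
-/

open ContinuousLinearMap

/-- `λ` belongs to the continuous spectrum of `A`: `A − λ` is injective, has dense
range, but is not surjective. -/
def ContSpec {E : Type*} [NormedAddCommGroup E] [NormedSpace ℂ E]
    (A : E →L[ℂ] E) (lam : ℂ) : Prop :=
  Function.Injective ⇑(A - lam • (1 : E →L[ℂ] E)) ∧
  DenseRange ⇑(A - lam • (1 : E →L[ℂ] E)) ∧
  ¬ Function.Surjective ⇑(A - lam • (1 : E →L[ℂ] E))

open Function

section General

variable {𝕜 E F : Type*} [RCLike 𝕜]

theorem ContinuousLinearMap.denseRange_iff_injective_adjoint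
    [NormedAddCommGroup E] [InnerProductSpace 𝕜 E] [CompleteSpace E]
    [NormedAddCommGroup F] [InnerProductSpace 𝕜 F] [CompleteSpace F] (f : E →L[𝕜] F) :
    DenseRange f ↔ Injective (adjoint f) := by
  rw [← coe_coe (adjoint f), ← LinearMap.ker_eq_bot, ← orthogonal_range,
    ← Submodule.topologicalClosure_eq_top_iff, ← Submodule.dense_iff_topologicalClosure_eq_top,
    LinearMap.coe_range, coe_coe]
  rfl

theorem IsSelfAdjoint.denseRange_iff_injective [NormedAddCommGroup E] [InnerProductSpace 𝕜 E]
    [CompleteSpace E] {A : E →L[𝕜] E} (hA : IsSelfAdjoint A) : DenseRange A ↔ Injective A := by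
  rw [denseRange_iff_injective_adjoint, hA.adjoint_eq]

theorem ContinuousLinearMap.denseRange_iff_injective_of_adjoint_eq_conj [NormedAddCommGroup E]
    [InnerProductSpace 𝕜 E] [CompleteSpace E] {A S : E →L[𝕜] E} (hS2 : S ∘L S = 1)
    (hA : adjoint A = S ∘L A ∘L S) : DenseRange A ↔ Injective A := by
  have hSS (x : E) : S (S x) = x := congr($hS2 x)
  have hS : Injective S := LeftInverse.injective hSS
  rw [denseRange_iff_injective_adjoint, hA]
  refine ⟨fun h x y hxy ↦ hS (h ?_), fun h ↦ hS.comp (h.comp hS)⟩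
  simp [hSS, hxy]

variable [NormedAddCommGroup E] [NormedSpace 𝕜 E] [NormedAddCommGroup F] [NormedSpace 𝕜 F]

theorem ContinuousLinearMap.exists_antilipschitzWith_iff (f : E →L[𝕜] F) :
    (∃ K, AntilipschitzWith K f) ↔ ∃ c ≥ 0, ∀ x, ‖x‖ ≤ c * ‖f x‖ := by
  refine ⟨fun ⟨K, hK⟩ ↦ ⟨K, K.2, hK.le_mul_norm (map_zero f)⟩, fun ⟨c, hc, h⟩ ↦ ⟨⟨c, hc⟩, ?_⟩⟩
  exact f.antilipschitz_of_bound h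

theorem ContinuousLinearMap.surjective_iff_antilipschitz [CompleteSpace E] [CompleteSpace F]
    {f : E →L[𝕜] F} (hinj : Injective f) (hdense : DenseRange f) :
    Surjective f ↔ ∃ K, AntilipschitzWith K f := by
  have hclosure : (LinearMap.range (f : E →ₗ[𝕜] F)).topologicalClosure = ⊤ := by
    rwa [← Submodule.dense_iff_topologicalClosure_eq_top, LinearMap.coe_range, coe_coe]
  rw [← (bijective_iff_dense_range_and_antilipschitz f).trans (and_iff_right hclosure)]
  exact ⟨fun hsurj ↦ ⟨hinj, hsurj⟩, Bijective.surjective⟩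

end General

theorem le_of_le_mul_of_sq_le {n r s c k : ℝ} (hn : 0 ≤ n) (hk : 0 ≤ k) (hs : 0 ≤ s)
    (h₁ : n ≤ c * r) (h₂ : r ^ 2 ≤ k * (s * n)) : n ≤ c ^ 2 * k * s := by
  rcases hn.eq_or_lt with rfl | hn
  · positivity
  · have : n ^ 2 ≤ c ^ 2 * k * s * n := by nlinarith
    nlinarith

theorem le_of_le_add_of_sq_le {n r q α β γ : ℝ} (hα : 0 ≤ α) (hγ : 0 ≤ γ) (hr : 0 ≤ r)
    (h₁ : n ≤ α * r + β * q) (h₂ : q ^ 2 ≤ γ * r * n) : n ≤ (2 * α + 4 * β ^ 2 * γ) * r := by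
  have h4 : 0 ≤ 4 * β ^ 2 * γ * r := by positivity
  by_cases hq : 2 * (β * q) ≤ n
  · nlinarith
  · rcases le_or_gt n 0 with hn | hn
    · nlinarith
    · have : n ^ 2 ≤ 4 * β ^ 2 * γ * r * n := by nlinarith
      nlinarith

section ContSpec

variable {E : Type*} [NormedAddCommGroup E] [NormedSpace ℂ E]

theorem contSpec_iff_injective_and_not_antilipschitz [CompleteSpace E] {A : E →L[ℂ] E} {lam : ℂ}
    (h : DenseRange (A - lam • (1 : E →L[ℂ] E)) ↔ Injective (A - lam • (1 : E →L[ℂ] E))) :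
    ContSpec A lam ↔ Injective (A - lam • (1 : E →L[ℂ] E)) ∧
      ¬ ∃ K, AntilipschitzWith K (A - lam • (1 : E →L[ℂ] E)) := by
  unfold ContSpec
  constructor
  · rintro ⟨hinj, hdense, hsurj⟩
    exact ⟨hinj, by rwa [← surjective_iff_antilipschitz hinj hdense]⟩
  · rintro ⟨hinj, hanti⟩
    have hdense := h.2 hinj
    exact ⟨hinj, hdense, by rwa [surjective_iff_antilipschitz hinj hdense]⟩

theorem ContSpec.neg {A : E →L[ℂ] E} {lam : ℂ} (h : ContSpec A lam) : ContSpec (-A) (-lam) := by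
  obtain ⟨hinj, hdense, hsurj⟩ := h
  have hneg : -A - (-lam) • (1 : E →L[ℂ] E) = -(A - lam • 1) := by rw [neg_smul]; abel
  unfold ContSpec
  rw [hneg]
  refine ⟨neg_injective.comp hinj, neg_surjective.denseRange.comp hdense continuous_neg,
    fun hs ↦ hsurj ?_⟩
  rw [← neg_neg (A - lam • 1), FunLike.coe_neg]
  exact neg_surjective.comp hs

theorem contSpec_neg_iff {A : E →L[ℂ] E} {lam : ℂ} : ContSpec (-A) lam ↔ ContSpec A (-lam) :=
  ⟨fun h ↦ by simpa using h.neg, fun h ↦ by simpa using h.neg⟩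

end ContSpec

namespace QuantumWalk

variable {H K : Type*} [NormedAddCommGroup H] [InnerProductSpace ℂ H] [CompleteSpace H]
  [NormedAddCommGroup K] [InnerProductSpace ℂ K] [CompleteSpace K]

noncomputable def coin (a b : ℝ) (d : H →L[ℂ] K) : H →L[ℂ] H :=
  (a : ℂ) • (adjoint d ∘L d) + (b : ℂ) • (1 - adjoint d ∘L d)

noncomputable def evolution (a b : ℝ) (d : H →L[ℂ] K) (S : H →L[ℂ] H) : H →L[ℂ] H :=
  S ∘L coin a b d

noncomputable def discriminant (d : H →L[ℂ] K) (S : H →L[ℂ] H) : K →L[ℂ] K :=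
  d ∘L S ∘L adjoint d

variable {a b : ℝ} {d : H →L[ℂ] K}

theorem coin_apply (x : H) :
    coin a b d x = (a : ℂ) • adjoint d (d x) + (b : ℂ) • (x - adjoint d (d x)) := by
  simp [coin]

@[simp]
theorem evolution_apply (S : H →L[ℂ] H) (x : H) : evolution a b d S x = S (coin a b d x) := rfl

@[simp]
theorem discriminant_apply (S : H →L[ℂ] H) (u : K) :
    discriminant d S u = d (S (adjoint d u)) := rfl

theorem isSelfAdjoint_coin : IsSelfAdjoint (coin a b d) := by
  have hP : IsSelfAdjoint (adjoint d ∘L d) := by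
    rw [isSelfAdjoint_iff', adjoint_comp, adjoint_adjoint]
  have hr (r : ℝ) : IsSelfAdjoint (r : ℂ) := Complex.conj_ofReal r
  exact ((hr a).smul hP).add ((hr b).smul ((IsSelfAdjoint.one _).sub hP))

section Coisometry

variable (hd : d ∘L adjoint d = 1)
include hd

theorem apply_adjoint_apply (u : K) : d (adjoint d u) = u :=
  congr($hd u)

theorem norm_adjoint_apply (u : K) : ‖adjoint d u‖ = ‖u‖ :=
  (norm_map_iff_adjoint_comp_self (adjoint d)).mpr (by rwa [adjoint_adjoint]) u

theorem inner_adjoint_apply_sub_eq_zero (u : K) (x : H) :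
    inner ℂ (adjoint d u) (x - adjoint d (d x)) = 0 := by
  rw [adjoint_inner_left, map_sub, apply_adjoint_apply hd, sub_self, inner_zero_right]

theorem norm_sq_eq_norm_apply_sq_add (x : H) : ‖x‖ ^ 2 = ‖d x‖ ^ 2 + ‖x - adjoint d (d x)‖ ^ 2 := by
  have h := norm_add_sq_eq_norm_sq_add_norm_sq_of_inner_eq_zero _ _
    (inner_adjoint_apply_sub_eq_zero hd (d x) x)
  rw [add_sub_cancel, norm_adjoint_apply hd] at h
  simpa only [sq] using h

theorem norm_apply_le (x : H) : ‖d x‖ ≤ ‖x‖ :=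
  (pow_le_pow_iff_left₀ (norm_nonneg _) (norm_nonneg _) two_ne_zero).mp <| by
    nlinarith [norm_sq_eq_norm_apply_sq_add hd x]

theorem norm_le_norm_apply_add (x : H) : ‖x‖ ≤ ‖d x‖ + ‖x - adjoint d (d x)‖ :=
  calc ‖x‖ = ‖adjoint d (d x) + (x - adjoint d (d x))‖ := by rw [add_sub_cancel]
    _ ≤ ‖d x‖ + ‖x - adjoint d (d x)‖ := (norm_add_le _ _).trans_eq (by rw [norm_adjoint_apply hd])

theorem coin_adjoint_apply (u : K) : coin a b d (adjoint d u) = (a : ℂ) • adjoint d u := by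
  simp [coin_apply, apply_adjoint_apply hd]

theorem norm_coin_apply_sq (x : H) :
    ‖coin a b d x‖ ^ 2 = a ^ 2 * ‖d x‖ ^ 2 + b ^ 2 * ‖x - adjoint d (d x)‖ ^ 2 := by
  have horth : inner ℂ ((a : ℂ) • adjoint d (d x)) ((b : ℂ) • (x - adjoint d (d x))) = 0 := by
    rw [inner_smul_left, inner_smul_right, inner_adjoint_apply_sub_eq_zero hd, mul_zero, mul_zero]
  have h := norm_add_sq_eq_norm_sq_add_norm_sq_of_inner_eq_zero _ _ horth
  simp only [← sq, norm_smul, mul_pow, Complex.norm_real, Real.norm_eq_abs, sq_abs,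
    norm_adjoint_apply hd] at h
  rw [coin_apply, h]

end Coisometry

section Walk

variable {S : H →L[ℂ] H} (hd : d ∘L adjoint d = 1) (hS : IsSelfAdjoint S) (hS2 : S ∘L S = 1)

include hS hS2 in
theorem norm_apply_of_involution (x : H) : ‖S x‖ = ‖x‖ :=
  (norm_map_iff_adjoint_comp_self S).mpr (by rwa [hS.adjoint_eq]) x

variable (a b) in
include hd hS hS2 in
theorem norm_evolution_sub_adjoint_apply_sq_le (u : K) :
    ‖(evolution a b d S - (a : ℂ) • 1) (adjoint d u)‖ ^ 2 ≤
      2 * a ^ 2 * (‖(discriminant d S - (1 : ℂ) • 1) u‖ * ‖u‖) := by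
  set v := adjoint d u
  have hA : (evolution a b d S - (a : ℂ) • 1) v = (a : ℂ) • (S v - v) := by
    simp [v, coin_adjoint_apply hd, smul_sub]
  have hB : inner ℂ ((discriminant d S - (1 : ℂ) • 1) u) u = inner ℂ (S v - v) v := by
    rw [adjoint_inner_right, map_sub, apply_adjoint_apply hd]
    simp [v, inner_sub_left]
  have hSv : ‖S v - v‖ ^ 2 = -2 * RCLike.re (inner ℂ (S v - v) v) := by
    rw [norm_sub_sq (𝕜 := ℂ), norm_apply_of_involution hS hS2, inner_sub_left, map_sub,
      inner_self_eq_norm_sq (𝕜 := ℂ)]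
    ring
  have hre : -RCLike.re (inner ℂ (S v - v) v) ≤ ‖(discriminant d S - (1 : ℂ) • 1) u‖ * ‖u‖ := by
    rw [← hB, ← map_neg, ← inner_neg_left, ← norm_neg ((discriminant d S - (1 : ℂ) • 1) u)]
    exact re_inner_le_norm _ _
  rw [hA, norm_smul, mul_pow, hSv, Complex.norm_real, Real.norm_eq_abs, sq_abs]
  nlinarith [sq_nonneg a]

variable (a b) in
include hd hS hS2 in
theorem abs_sq_sub_sq_mul_norm_sq_le (x : H) :
    |a ^ 2 - b ^ 2| * ‖x - adjoint d (d x)‖ ^ 2 ≤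
      ‖(evolution a b d S - (a : ℂ) • 1) x‖ * (‖coin a b d x‖ + |a| * ‖x‖) := by
  have hdiff : |‖coin a b d x‖ - |a| * ‖x‖| ≤ ‖(evolution a b d S - (a : ℂ) • 1) x‖ := by
    simpa [norm_apply_of_involution hS hS2, norm_smul] using
      abs_norm_sub_norm_le (S (coin a b d x)) ((a : ℂ) • x)
  have hsq : (a ^ 2 - b ^ 2) * ‖x - adjoint d (d x)‖ ^ 2 =
      (|a| * ‖x‖ + ‖coin a b d x‖) * (|a| * ‖x‖ - ‖coin a b d x‖) := by
    rw [← sq_sub_sq, norm_coin_apply_sq hd, mul_pow, sq_abs, norm_sq_eq_norm_apply_sq_add hd x]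
    ring
  rw [← abs_of_nonneg (sq_nonneg ‖x - adjoint d (d x)‖), ← abs_mul, hsq, abs_mul,
    abs_of_nonneg (by positivity), abs_sub_comm, add_comm, mul_comm]
  gcongr

variable (a b) in
include hd hS hS2 in
theorem abs_mul_norm_discriminant_sub_apply_le (x : H) :
    |a| * ‖(discriminant d S - (1 : ℂ) • 1) (d x)‖ ≤
      ‖(evolution a b d S - (a : ℂ) • 1) x‖ + (|a| + |b|) * ‖x - adjoint d (d x)‖ := by
  set p := adjoint d (d x)
  set q := x - p
  have hT : (discriminant d S - (1 : ℂ) • 1) (d x) = d (S p - p) := by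
    simp [p, apply_adjoint_apply hd]
  have hU : (a : ℂ) • (S p - p) =
      (evolution a b d S - (a : ℂ) • 1) x - (b : ℂ) • S q + (a : ℂ) • q := by
    simp only [p, q, sub_apply, evolution_apply, smul_apply, one_apply_eq_self, coin_apply,
      map_add, map_sub, map_smul]
    module
  calc |a| * ‖(discriminant d S - (1 : ℂ) • 1) (d x)‖ = ‖d ((a : ℂ) • (S p - p))‖ := by
        rw [hT, map_smul, norm_smul, Complex.norm_real, Real.norm_eq_abs]
    _ ≤ ‖(a : ℂ) • (S p - p)‖ := norm_apply_le hd _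
    _ ≤ ‖(evolution a b d S - (a : ℂ) • 1) x‖ + |b| * ‖q‖ + |a| * ‖q‖ := by
        rw [hU]
        refine (norm_add_le _ _).trans (add_le_add ((norm_sub_le _ _).trans_eq ?_) ?_)
        · rw [norm_smul, Complex.norm_real, Real.norm_eq_abs, norm_apply_of_involution hS hS2]
        · rw [norm_smul, Complex.norm_real, Real.norm_eq_abs]
    _ = _ := by ring

include hS hS2 in
theorem adjoint_evolution_sub :
    adjoint (evolution a b d S - (a : ℂ) • 1) = S ∘L (evolution a b d S - (a : ℂ) • 1) ∘L S := by
  have hSS : S * S = 1 := hS2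
  rw [evolution, ← star_eq_adjoint]
  simp only [← mul_def, star_sub, star_mul, star_smul, hS.star_eq, isSelfAdjoint_coin.star_eq,
    star_one, Complex.star_def, Complex.conj_ofReal]
  rw [sub_mul, mul_sub, ← mul_assoc, ← mul_assoc, hSS, one_mul, smul_mul_assoc, one_mul,
    mul_smul_comm, hSS]

variable (a b) in
include hS hS2 in
theorem denseRange_evolution_sub_iff :
    DenseRange (evolution a b d S - (a : ℂ) • (1 : H →L[ℂ] H)) ↔
      Injective (evolution a b d S - (a : ℂ) • (1 : H →L[ℂ] H)) :=
  denseRange_iff_injective_of_adjoint_eq_conj hS2 (adjoint_evolution_sub hS hS2)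

include hS in
theorem denseRange_discriminant_sub_iff :
    DenseRange (discriminant d S - (1 : ℂ) • (1 : K →L[ℂ] K)) ↔
      Injective (discriminant d S - (1 : ℂ) • (1 : K →L[ℂ] K)) :=
  ((hS.conj_adjoint d).sub (.smul (by simp) (.one _))).denseRange_iff_injective

include hd hS hS2 in
theorem injective_evolution_sub_iff (ha : a ≠ 0) (hab : a ^ 2 ≠ b ^ 2) :
    Injective (evolution a b d S - (a : ℂ) • (1 : H →L[ℂ] H)) ↔
      Injective (discriminant d S - (1 : ℂ) • (1 : K →L[ℂ] K)) := by
  simp only [injective_iff_map_eq_zero]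
  constructor
  · intro hA u hu
    have h := norm_evolution_sub_adjoint_apply_sq_le a b hd hS hS2 u
    rw [hu, norm_zero, zero_mul, mul_zero] at h
    have hv : adjoint d u = 0 := hA _ <| norm_le_zero_iff.mp <| by
      nlinarith [norm_nonneg ((evolution a b d S - (a : ℂ) • 1) (adjoint d u))]
    rw [← apply_adjoint_apply hd u, hv, map_zero]
  · intro hB x hx
    have hm : 0 < |a ^ 2 - b ^ 2| := abs_pos.mpr (sub_ne_zero.mpr hab)
    have hq : ‖x - adjoint d (d x)‖ = 0 := by
      have h := abs_sq_sub_sq_mul_norm_sq_le a b hd hS hS2 x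
      rw [hx, norm_zero, zero_mul] at h
      exact pow_eq_zero_iff two_ne_zero |>.mp <|
        le_antisymm (nonpos_of_mul_nonpos_right h hm) (sq_nonneg _)
    have hdx : d x = 0 := by
      have h := abs_mul_norm_discriminant_sub_apply_le a b hd hS hS2 x
      rw [hx, hq, norm_zero, mul_zero, add_zero] at h
      exact hB _ (norm_le_zero_iff.mp (by nlinarith [abs_pos.mpr ha]))
    have h := norm_le_norm_apply_add hd x
    rw [hq, hdx, norm_zero, zero_add] at h
    exact norm_le_zero_iff.mp h

include hd hS hS2 in
theorem exists_antilipschitzWith_evolution_sub_iff (ha : a ≠ 0) (hab : a ^ 2 ≠ b ^ 2) :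
    (∃ k, AntilipschitzWith k (evolution a b d S - (a : ℂ) • (1 : H →L[ℂ] H))) ↔
      ∃ k, AntilipschitzWith k (discriminant d S - (1 : ℂ) • (1 : K →L[ℂ] K)) := by
  simp only [exists_antilipschitzWith_iff]
  constructor
  · rintro ⟨c, -, hc⟩
    refine ⟨c ^ 2 * (2 * a ^ 2), by positivity, fun u ↦ ?_⟩
    refine le_of_le_mul_of_sq_le (norm_nonneg u) (by positivity) (norm_nonneg _) ?_
      (norm_evolution_sub_adjoint_apply_sq_le a b hd hS hS2 u)
    simpa only [norm_adjoint_apply hd] using hc (adjoint d u)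
  · rintro ⟨c, hc0, hc⟩
    have ha' : 0 < |a| := abs_pos.mpr ha
    have hm : 0 < |a ^ 2 - b ^ 2| := abs_pos.mpr (sub_ne_zero.mpr hab)
    refine ⟨2 * (c / |a|) + 4 * (c * (|a| + |b|) / |a| + 1) ^ 2 *
      ((‖coin a b d‖ + |a|) / |a ^ 2 - b ^ 2|), by positivity, fun x ↦ ?_⟩
    set r := ‖(evolution a b d S - (a : ℂ) • 1) x‖
    set q := ‖x - adjoint d (d x)‖
    refine le_of_le_add_of_sq_le (q := q) (by positivity) (by positivity) (norm_nonneg _) ?_ ?_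
    · have hdx : ‖d x‖ * |a| ≤ c * (r + (|a| + |b|) * q) :=
        calc ‖d x‖ * |a| ≤ c * (|a| * ‖(discriminant d S - (1 : ℂ) • 1) (d x)‖) := by
              nlinarith [hc (d x)]
          _ ≤ c * (r + (|a| + |b|) * q) := by
              gcongr
              exact abs_mul_norm_discriminant_sub_apply_le a b hd hS hS2 x
      calc ‖x‖ ≤ ‖d x‖ + q := norm_le_norm_apply_add hd x
        _ ≤ c * (r + (|a| + |b|) * q) / |a| + q := by gcongr; rwa [le_div_iff₀ ha']
        _ = c / |a| * r + (c * (|a| + |b|) / |a| + 1) * q := by field_simp; ring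
    · have hC := mul_le_mul_of_nonneg_left ((coin a b d).le_opNorm x)
        (show 0 ≤ r from norm_nonneg _)
      rw [div_mul_eq_mul_div, div_mul_eq_mul_div, le_div_iff₀ hm]
      nlinarith [abs_sq_sub_sq_mul_norm_sq_le a b hd hS hS2 x]

theorem evolution_neg : evolution a b d (-S) = -evolution a b d S :=
  ContinuousLinearMap.neg_comp _ _

theorem discriminant_neg : discriminant d (-S) = -discriminant d S := by
  simp [discriminant]

include hd hS hS2 in
theorem contSpec_evolution_iff (ha : a ≠ 0) (hab : a ^ 2 ≠ b ^ 2) :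
    ContSpec (evolution a b d S) a ↔ ContSpec (discriminant d S) 1 := by
  rw [contSpec_iff_injective_and_not_antilipschitz (denseRange_evolution_sub_iff a b hS hS2),
    contSpec_iff_injective_and_not_antilipschitz (denseRange_discriminant_sub_iff hS),
    injective_evolution_sub_iff hd hS hS2 ha hab,
    exists_antilipschitzWith_evolution_sub_iff hd hS hS2 ha hab]

end Walk

end QuantumWalk

theorem stmt_17_general {H K : Type*}
    [NormedAddCommGroup H] [InnerProductSpace ℂ H] [CompleteSpace H]
    [NormedAddCommGroup K] [InnerProductSpace ℂ K] [CompleteSpace K]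
    (a b : ℝ)
    (d : H →L[ℂ] K) (hd : d ∘L (adjoint d) = 1)
    (S : H →L[ℂ] H) (hS : IsSelfAdjoint S) (hS2 : S ∘L S = 1)
    (C : H →L[ℂ] H)
    (hC : C = (a : ℂ) • ((adjoint d) ∘L d) + (b : ℂ) • (1 - (adjoint d) ∘L d))
    (U : H →L[ℂ] H) (hU : U = S ∘L C)
    (T : K →L[ℂ] K) (hT : T = d ∘L S ∘L (adjoint d))
    (h4 : a ≠ b) (h5 : a ≠ -b) (h6 : a * b ≠ 0) :
    (ContSpec U (a : ℂ) ↔ ContSpec T 1) ∧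
    (ContSpec U (-(a : ℂ)) ↔ ContSpec T (-1)) := by
  have ha : a ≠ 0 := left_ne_zero_of_mul h6
  have hab : a ^ 2 ≠ b ^ 2 := fun h ↦ (sq_eq_sq_iff_eq_or_eq_neg.mp h).elim h4 h5
  subst hC hU hT
  refine ⟨QuantumWalk.contSpec_evolution_iff hd hS hS2 ha hab, ?_⟩
  have hS2' : (-S) ∘L (-S) = 1 := by
    rwa [ContinuousLinearMap.neg_comp, ContinuousLinearMap.comp_neg, neg_neg]
  have h := QuantumWalk.contSpec_evolution_iff (a := a) (b := b) hd hS.neg hS2' ha hab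
  rwa [QuantumWalk.evolution_neg, QuantumWalk.discriminant_neg, contSpec_neg_iff,
    contSpec_neg_iff] at h

/-- Under the standing assumptions, `a ∈ σ_c(U) ↔ 1 ∈ σ_c(T)` and
`−a ∈ σ_c(U) ↔ −1 ∈ σ_c(T)`. -/
theorem stmt_17 {H K : Type*}
    [NormedAddCommGroup H] [InnerProductSpace ℂ H] [CompleteSpace H] [Nontrivial H]
    [NormedAddCommGroup K] [InnerProductSpace ℂ K] [CompleteSpace K] [Nontrivial K]
    (a b : ℝ)
    (d : H →L[ℂ] K) (hd : d ∘L (adjoint d) = 1)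
    (S : H →L[ℂ] H) (hS : IsSelfAdjoint S) (hS2 : S ∘L S = 1)
    (C : H →L[ℂ] H)
    (hC : C = (a : ℂ) • ((adjoint d) ∘L d) + (b : ℂ) • (1 - (adjoint d) ∘L d))
    (U : H →L[ℂ] H) (hU : U = S ∘L C)
    (T : K →L[ℂ] K) (hT : T = d ∘L S ∘L (adjoint d))
    (h1 : (adjoint d) ∘L d ≠ 1) (h2 : S ≠ 1) (h3 : S ≠ -1)
    (h4 : a ≠ b) (h5 : a ≠ -b) (h6 : a * b ≠ 0) :
    (ContSpec U (a : ℂ) ↔ ContSpec T 1) ∧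
    (ContSpec U (-(a : ℂ)) ↔ ContSpec T (-1)) :=
  stmt_17_general a b d hd S hS hS2 C hC U hU T hT h4 h5 h6
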